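/- arXiv:0809.5153 — 4 statements merged into one kernel-verified Lean document; each statement's English description precedes it below -/
import Mathlib

section
/- Let ε > 0 and let φ, φ̃ : ℝ → ℝ be continuous functions satisfying |φ(t)| ≤ C₁(1+|t|)^{−1−ε} and |φ̃(t)| ≤ C₂(1+|t|)^{−1−ε} for all t ∈ ℝ. Define q(x,y) = Σ_{j∈ℤ} φ̃(x−j)·φ(y−j). Then for every fixed x₁ ∈ ℝ the function y ↦ q(x₁,y) belongs to L²(ℝ), and moreover the norm ‖q(x₁,·)‖_{L²(ℝ)} is bounded uniformly for x₁ ranging in any compact subset of ℝ. Analogously, for every fixed y₁ ∈ ℝ the function x ↦ q(x,y₁) belongs to L²(ℝ), uniformly for y₁ in compact sets. -/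
/-!
For fixed `x`, the function `y ↦ q(x,y)` is a series of integer translates of `φ ∈ L²` with
coefficients `c_j = φ̃(x−j)`, so Minkowski's inequality bounds its `L²` norm by
`(Σ_j |c_j|) ‖φ‖₂`. Peetre's inequality `1 + |j| ≤ (1 + |x|)(1 + |x − j|)` gives
`Σ_j |φ̃(x−j)| ≤ C₂ (1 + |x|)^{1+ε} Σ_j (1 + |j|)^{−1−ε}`, which is bounded on compact sets.
Since `q(x,y)` with `φ, φ̃` swapped is `q(y,x)`, the other variable is handled identically.
-/

open MeasureTheory ENNReal

noncomputable section

/-- The Walter kernel `q(x,y) = Σ_{j∈ℤ} φ̃(x−j)·φ(y−j)`. -/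
def qker (φ φt : ℝ → ℝ) (x y : ℝ) : ℝ := ∑' j : ℤ, φt (x - j) * φ (y - j)

namespace MeasureTheory

variable {X E ι : Type*} [MeasurableSpace X] {μ : Measure X} [NormedAddCommGroup E]
  [CompleteSpace E] [Countable ι] {p : ℝ≥0∞} [Fact (1 ≤ p)]

/-- The series converges absolutely in the Banach space `Lp`, and its sum there agrees a.e. with
the pointwise sum. -/
theorem memLp_tsum_and_eLpNorm_tsum_le {f : ι → X → E} (hf : ∀ n, MemLp (f n) p μ)
    (hsum : ∑' n, eLpNorm (f n) p μ ≠ ∞) :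
    MemLp (fun x => ∑' n, f n x) p μ ∧
      eLpNorm (fun x => ∑' n, f n x) p μ ≤ ∑' n, eLpNorm (f n) p μ := by
  set F : ι → Lp E p μ := fun n => (hf n).toLp (f n)
  have hF : ∑' n, ‖F n‖ₑ = ∑' n, eLpNorm (f n) p μ := tsum_congr fun n => Lp.enorm_toLp (hf n)
  have hae : ⇑(∑' n, F n) =ᵐ[μ] fun x => ∑' n, f n x := by
    have hcoe : ∀ᵐ x ∂μ, ∀ n, F n x = f n x := ae_all_iff.2 fun n => (hf n).coeFn_toLp
    filter_upwards [Lp.coeFn_tsum (hF ▸ hsum), hcoe] with x hx hcoe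
    simp only [hx, hcoe]
  refine ⟨(Lp.memLp _).ae_eq hae, ?_⟩
  rw [← eLpNorm_congr_ae hae, ← Lp.enorm_def, ← hF]
  exact enorm_tsum_le_tsum_enorm

theorem memLp_tsum_smul_translate {G : Type*} [MeasurableSpace G] [AddGroup G] [MeasurableAdd G]
    {μ : Measure G} [μ.IsAddRightInvariant] [NormedSpace ℝ E] {f : G → E} (hf : MemLp f p μ)
    {c : ι → ℝ} (hc : Summable fun j => |c j|) (a : ι → G) :
    MemLp (fun y => ∑' j, c j • f (y - a j)) p μ ∧
      eLpNorm (fun y => ∑' j, c j • f (y - a j)) p μ ≤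
        ENNReal.ofReal (∑' j, |c j|) * eLpNorm f p μ := by
  have htrans (j : ι) : MemLp (fun y => c j • f (y - a j)) p μ :=
    (hf.comp_measurePreserving (measurePreserving_sub_right μ (a j))).const_smul (c j)
  have hnorm (j : ι) :
      eLpNorm (fun y => c j • f (y - a j)) p μ = ENNReal.ofReal |c j| * eLpNorm f p μ := by
    rw [← Real.enorm_eq_ofReal_abs,
      ← eLpNorm_comp_measurePreserving hf.1 (measurePreserving_sub_right μ (a j))]
    exact eLpNorm_const_smul (c j) (fun y => f (y - a j)) p μ
  have htsum : ∑' j, eLpNorm (fun y => c j • f (y - a j)) p μ =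
      ENNReal.ofReal (∑' j, |c j|) * eLpNorm f p μ := by
    simp_rw [hnorm]
    rw [ENNReal.tsum_mul_right, ENNReal.ofReal_tsum_of_nonneg (fun j => abs_nonneg _) hc]
  obtain ⟨hmem, hle⟩ := memLp_tsum_and_eLpNorm_tsum_le htrans
    (htsum ▸ ENNReal.mul_ne_top ofReal_ne_top hf.eLpNorm_ne_top)
  exact ⟨hmem, htsum ▸ hle⟩

end MeasureTheory

theorem one_add_abs_le_mul_one_add_abs_sub (x y : ℝ) : 1 + |y| ≤ (1 + |x|) * (1 + |x - y|) := by
  nlinarith [abs_sub_abs_le_abs_sub y x, abs_sub_comm x y, abs_nonneg x, abs_nonneg (x - y)]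

theorem one_div_one_add_abs_sub_rpow_le {p : ℝ} (hp : 0 ≤ p) (x y : ℝ) :
    1 / (1 + |x - y|) ^ p ≤ (1 + |x|) ^ p / (1 + |y|) ^ p := by
  rw [div_le_div_iff₀ (by positivity) (by positivity), one_mul,
    ← Real.mul_rpow (by positivity) (by positivity)]
  exact Real.rpow_le_rpow (by positivity) (one_add_abs_le_mul_one_add_abs_sub x y) hp

theorem summable_one_div_one_add_abs_int_rpow {p : ℝ} (hp : 1 < p) :
    Summable fun j : ℤ => 1 / (1 + |(j : ℝ)|) ^ p := by
  refine summable_int_iff_summable_nat_and_neg.2 ⟨?_, ?_⟩ <;>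
    simpa [add_comm, abs_of_pos, Nat.cast_add_one_pos] using
      (Real.summable_one_div_nat_add_rpow 1 p).2 hp

section Decay

variable {f : ℝ → ℝ} {C p : ℝ}

theorem memLp_two_of_abs_le_div_one_add_abs_rpow (hp : 1 < 2 * p) (hfm : AEStronglyMeasurable f)
    (hf : ∀ t, |f t| ≤ C / (1 + |t|) ^ p) : MemLp f 2 volume := by
  rw [memLp_two_iff_integrable_sq hfm]
  have hdom : Integrable (fun t : ℝ => C ^ 2 * (1 + ‖t‖) ^ (-(2 * p))) :=
    (integrable_one_add_norm (by simpa using hp)).const_mul _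
  refine hdom.mono' (hfm.pow 2) (ae_of_all _ fun t => ?_)
  have ht : 0 < 1 + |t| := by positivity
  calc ‖f t ^ 2‖ = |f t| ^ 2 := by rw [Real.norm_eq_abs, abs_pow]
    _ ≤ (C / (1 + |t|) ^ p) ^ 2 := pow_le_pow_left₀ (abs_nonneg _) (hf t) 2
    _ = C ^ 2 * (1 + ‖t‖) ^ (-(2 * p)) := by
      rw [Real.norm_eq_abs, div_pow, ← Real.rpow_natCast ((1 + |t|) ^ p), ← Real.rpow_mul ht.le,
        Real.rpow_neg ht.le, div_eq_mul_inv]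
      norm_num [mul_comm]

theorem abs_sub_int_le_of_abs_le_div (hp : 0 ≤ p) (hf : ∀ t, |f t| ≤ C / (1 + |t|) ^ p)
    (x : ℝ) (j : ℤ) : |f (x - j)| ≤ C * (1 + |x|) ^ p * (1 / (1 + |(j : ℝ)|) ^ p) := by
  have hC : 0 ≤ C := by simpa using (abs_nonneg _).trans (hf 0)
  calc |f (x - j)| ≤ C * (1 / (1 + |x - j|) ^ p) := by simpa [div_eq_mul_inv] using hf (x - j)
    _ ≤ C * ((1 + |x|) ^ p / (1 + |(j : ℝ)|) ^ p) :=
      mul_le_mul_of_nonneg_left (one_div_one_add_abs_sub_rpow_le hp x j) hC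
    _ = C * (1 + |x|) ^ p * (1 / (1 + |(j : ℝ)|) ^ p) := by ring

theorem summable_abs_sub_int_of_abs_le_div (hp : 1 < p) (hf : ∀ t, |f t| ≤ C / (1 + |t|) ^ p)
    (x : ℝ) : Summable fun j : ℤ => |f (x - j)| :=
  .of_nonneg_of_le (fun _ => abs_nonneg _) (abs_sub_int_le_of_abs_le_div (by linarith) hf x)
    ((summable_one_div_one_add_abs_int_rpow hp).mul_left _)

theorem tsum_abs_sub_int_le_of_abs_le_div (hp : 1 < p) (hf : ∀ t, |f t| ≤ C / (1 + |t|) ^ p)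
    (x : ℝ) : ∑' j : ℤ, |f (x - j)| ≤
      C * (1 + |x|) ^ p * ∑' j : ℤ, 1 / (1 + |(j : ℝ)|) ^ p := by
  rw [← tsum_mul_left]
  exact (summable_abs_sub_int_of_abs_le_div hp hf x).tsum_le_tsum
    (abs_sub_int_le_of_abs_le_div (by linarith) hf x)
    ((summable_one_div_one_add_abs_int_rpow hp).mul_left _)

end Decay

theorem qker_comm (φ ψ : ℝ → ℝ) (x y : ℝ) : qker φ ψ x y = qker ψ φ y x :=
  tsum_congr fun _ => mul_comm _ _

theorem qker_memLp_and_eLpNorm_le {φ ψ : ℝ → ℝ} {C D p : ℝ} (hp : 1 < p)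
    (hφm : AEStronglyMeasurable φ) (hφ : ∀ t, |φ t| ≤ C / (1 + |t|) ^ p)
    (hψ : ∀ t, |ψ t| ≤ D / (1 + |t|) ^ p) (x : ℝ) :
    MemLp (fun y => qker φ ψ x y) 2 volume ∧
      eLpNorm (fun y => qker φ ψ x y) 2 volume ≤
        ENNReal.ofReal (D * (1 + |x|) ^ p * ∑' j : ℤ, 1 / (1 + |(j : ℝ)|) ^ p) *
          eLpNorm φ 2 volume := by
  have hφ2 := memLp_two_of_abs_le_div_one_add_abs_rpow (by linarith) hφm hφ
  obtain ⟨hmem, hle⟩ := memLp_tsum_smul_translate hφ2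
    (summable_abs_sub_int_of_abs_le_div hp hψ x) (fun j : ℤ => (j : ℝ))
  refine ⟨hmem, hle.trans ?_⟩
  gcongr
  exact tsum_abs_sub_int_le_of_abs_le_div hp hψ x

theorem qker_memLp_and_eLpNorm_bounded_on_compact {φ ψ : ℝ → ℝ} {C D p : ℝ} (hp : 1 < p)
    (hφm : AEStronglyMeasurable φ) (hφ : ∀ t, |φ t| ≤ C / (1 + |t|) ^ p)
    (hψ : ∀ t, |ψ t| ≤ D / (1 + |t|) ^ p) :
    (∀ x, MemLp (fun y => qker φ ψ x y) 2 volume) ∧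
      ∀ K : Set ℝ, IsCompact K → ∃ M : ℝ≥0∞, M < ⊤ ∧
        ∀ x ∈ K, eLpNorm (fun y => qker φ ψ x y) 2 volume ≤ M := by
  have hφ2 := memLp_two_of_abs_le_div_one_add_abs_rpow (by linarith) hφm hφ
  have hqker := qker_memLp_and_eLpNorm_le hp hφm hφ hψ
  refine ⟨fun x => (hqker x).1, fun K hK => ?_⟩
  obtain ⟨r, hr⟩ := hK.isBounded.subset_closedBall 0
  have hD : 0 ≤ D := by simpa using (abs_nonneg _).trans (hψ 0)
  have hS : 0 ≤ ∑' j : ℤ, 1 / (1 + |(j : ℝ)|) ^ p := tsum_nonneg fun _ => by positivity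
  refine ⟨ENNReal.ofReal (D * (1 + r) ^ p * ∑' j : ℤ, 1 / (1 + |(j : ℝ)|) ^ p) *
    eLpNorm φ 2 volume, mul_lt_top ofReal_lt_top hφ2.eLpNorm_lt_top,
    fun x hx => (hqker x).2.trans ?_⟩
  have hxr : |x| ≤ r := by simpa using hr hx
  gcongr

theorem statement1_general
    (ε C₁ C₂ : ℝ) (hε : 0 < ε)
    (φ φt : ℝ → ℝ) (hφc : Continuous φ) (hφtc : Continuous φt)
    (hφ : ∀ t : ℝ, |φ t| ≤ C₁ / (1 + |t|) ^ (1 + ε))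
    (hφt : ∀ t : ℝ, |φt t| ≤ C₂ / (1 + |t|) ^ (1 + ε)) :
    (∀ x₁ : ℝ, MemLp (fun y => qker φ φt x₁ y) 2 volume) ∧
    (∀ K : Set ℝ, IsCompact K → ∃ M : ℝ≥0∞, M < ⊤ ∧
      ∀ x₁ ∈ K, eLpNorm (fun y => qker φ φt x₁ y) 2 volume ≤ M) ∧
    (∀ y₁ : ℝ, MemLp (fun x => qker φ φt x y₁) 2 volume) ∧
    (∀ K : Set ℝ, IsCompact K → ∃ M : ℝ≥0∞, M < ⊤ ∧
      ∀ y₁ ∈ K, eLpNorm (fun x => qker φ φt x y₁) 2 volume ≤ M) := by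
  have hp : 1 < 1 + ε := by linarith
  obtain ⟨hrow, hrow_bdd⟩ :=
    qker_memLp_and_eLpNorm_bounded_on_compact hp hφc.aestronglyMeasurable hφ hφt
  obtain ⟨hcol, hcol_bdd⟩ :=
    qker_memLp_and_eLpNorm_bounded_on_compact hp hφtc.aestronglyMeasurable hφt hφ
  simp only [qker_comm φt φ] at hcol hcol_bdd
  exact ⟨hrow, hrow_bdd, hcol, hcol_bdd⟩

/-- Let `ε > 0` and let `φ, φ̃ : ℝ → ℝ` be continuous functions with the decay
`|φ(t)| ≤ C₁(1+|t|)^{−1−ε}`, `|φ̃(t)| ≤ C₂(1+|t|)^{−1−ε}`.  Define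
`q(x,y) = Σ_{j∈ℤ} φ̃(x−j)·φ(y−j)`.  Then for every fixed `x₁ ∈ ℝ` the function `y ↦ q(x₁,y)`
belongs to `L²(ℝ)`, with `L²`-norm bounded uniformly for `x₁` in any compact subset of `ℝ`;
analogously for `x ↦ q(x,y₁)`, uniformly for `y₁` in compact sets. -/
theorem statement1
    (ε C₁ C₂ : ℝ) (hε : 0 < ε) (hC₁ : 0 < C₁) (hC₂ : 0 < C₂)
    (φ φt : ℝ → ℝ) (hφc : Continuous φ) (hφtc : Continuous φt)
    (hφ : ∀ t : ℝ, |φ t| ≤ C₁ / (1 + |t|) ^ (1 + ε))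
    (hφt : ∀ t : ℝ, |φt t| ≤ C₂ / (1 + |t|) ^ (1 + ε)) :
    (∀ x₁ : ℝ, MemLp (fun y => qker φ φt x₁ y) 2 volume) ∧
    (∀ K : Set ℝ, IsCompact K → ∃ M : ℝ≥0∞, M < ⊤ ∧
      ∀ x₁ ∈ K, eLpNorm (fun y => qker φ φt x₁ y) 2 volume ≤ M) ∧
    (∀ y₁ : ℝ, MemLp (fun x => qker φ φt x y₁) 2 volume) ∧
    (∀ K : Set ℝ, IsCompact K → ∃ M : ℝ≥0∞, M < ⊤ ∧
      ∀ y₁ ∈ K, eLpNorm (fun x => qker φ φt x y₁) 2 volume ≤ M) :=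
  statement1_general ε C₁ C₂ hε φ φt hφc hφtc hφ hφt
end
end

section
/- Let m ≥ 2 be an even integer, let v₁, …, v_m be negative real numbers satisfying v_j · v_{m+1−j} = 1 for j = 1, …, m, let D be a nonzero complex number, and let P(λ) = D·∏_{j=1}^{m} (λ − v_j). Then for every ξ ∈ ℝ one has |P(−1)| ≤ |P(e^{iξ})| ≤ |P(1)|. -/
/-! For real `w` and `‖z‖ = 1`, `‖z - w‖² = 1 - 2 w Re z + w²`, which for `w ≤ 0` increases with
`Re z ∈ [-1, 1]`. Hence every factor `‖e^{iξ} - v_j‖` of `‖P(e^{iξ})‖` lies between its values at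
`-1` and at `1`. -/

open Complex

theorem Complex.norm_sub_ofReal_sq (z : ℂ) (w : ℝ) :
    ‖z - w‖ ^ 2 = ‖z‖ ^ 2 - 2 * w * z.re + w ^ 2 := by
  simp only [Complex.sq_norm, normSq_apply, sub_re, sub_im, ofReal_re, ofReal_im]
  ring

theorem Complex.norm_sub_ofReal_le_of_re_le {z z' : ℂ} (hz : ‖z‖ = ‖z'‖) {w : ℝ} (hw : w ≤ 0)
    (hre : z.re ≤ z'.re) : ‖z - w‖ ≤ ‖z' - w‖ := by
  refine (pow_le_pow_iff_left₀ (norm_nonneg _) (norm_nonneg _) two_ne_zero).mp ?_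
  rw [norm_sub_ofReal_sq, norm_sub_ofReal_sq, hz]
  nlinarith

theorem Complex.norm_mul_prod_sub_ofReal_le {ι : Type*} (s : Finset ι) (v : ι → ℝ)
    (hv : ∀ j ∈ s, v j ≤ 0) (D : ℂ) {z z' : ℂ} (hz : ‖z‖ = ‖z'‖) (hre : z.re ≤ z'.re) :
    ‖D * ∏ j ∈ s, (z - v j)‖ ≤ ‖D * ∏ j ∈ s, (z' - v j)‖ := by
  rw [norm_mul, norm_mul, norm_prod, norm_prod]
  gcongr with j hj
  exact norm_sub_ofReal_le_of_re_le hz (hv j hj) hre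

theorem statement7_general
    (m : ℕ)
    (v : ℕ → ℝ)
    (hneg : ∀ j : ℕ, 1 ≤ j → j ≤ m → v j < 0)
    (D : ℂ)
    (P : ℂ → ℂ) (hP : ∀ lam : ℂ, P lam = D * ∏ j ∈ Finset.Icc 1 m, (lam - (v j : ℂ))) :
    ∀ ξ : ℝ,
      ‖P (-1)‖ ≤ ‖P (Complex.exp (Complex.I * ξ))‖ ∧
      ‖P (Complex.exp (Complex.I * ξ))‖ ≤ ‖P 1‖ := by
  intro ξ
  have hunit : ‖exp (I * ξ)‖ = 1 := by
    rw [mul_comm]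
    exact norm_exp_ofReal_mul_I ξ
  have hre : |(exp (I * ξ)).re| ≤ 1 := hunit ▸ abs_re_le_norm _
  have hv : ∀ j ∈ Finset.Icc 1 m, v j ≤ 0 := fun j hj =>
    (hneg j (Finset.mem_Icc.1 hj).1 (Finset.mem_Icc.1 hj).2).le
  rw [hP, hP, hP]
  exact ⟨norm_mul_prod_sub_ofReal_le _ v hv D (by simp [hunit]) (by simpa using (abs_le.1 hre).1),
    norm_mul_prod_sub_ofReal_le _ v hv D (by simp [hunit]) (by simpa using (abs_le.1 hre).2)⟩

/-- Let `m ≥ 2` be an even integer, `v₁, …, v_m` negative reals with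
`v_j · v_{m+1−j} = 1` for `j = 1, …, m`, `D ≠ 0` complex, and
`P(λ) = D·∏_{j=1}^m (λ − v_j)`.  Then for every `ξ ∈ ℝ`,
`|P(−1)| ≤ |P(e^{iξ})| ≤ |P(1)|`. -/
theorem statement7
    (m : ℕ) (hm : 2 ≤ m) (hme : Even m)
    (v : ℕ → ℝ)
    (hneg : ∀ j : ℕ, 1 ≤ j → j ≤ m → v j < 0)
    (hpair : ∀ j : ℕ, 1 ≤ j → j ≤ m → v j * v (m + 1 - j) = 1)
    (D : ℂ) (hD : D ≠ 0)
    (P : ℂ → ℂ) (hP : ∀ lam : ℂ, P lam = D * ∏ j ∈ Finset.Icc 1 m, (lam - (v j : ℂ))) :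
    ∀ ξ : ℝ,
      ‖P (-1)‖ ≤ ‖P (Complex.exp (Complex.I * ξ))‖ ∧
      ‖P (Complex.exp (Complex.I * ξ))‖ ≤ ‖P 1‖ :=
  statement7_general m v hneg D P hP
end

section
/- Fix an integer p ≥ 1, set N = 2p, and let λ₁, …, λ_N be real numbers whose multiset is symmetric, i.e. {λ₁, …, λ_N} = {−λ₁, …, −λ_N} as multisets. Let Q : ℝ → ℝ be a continuous function supported in the interval [0, N] whose Fourier transform satisfies 𝓕Q(ξ) = ∫_ℝ e^{−iξt} Q(t) dt = ∏_{j=1}^{N} (e^{−λ_j} − e^{−iξ})/(iξ − λ_j) for every ξ ∈ ℝ with iξ ≠ λ_j for all j. Then the function φ*(ξ) := Σ_{j∈ℤ} Q(j)·e^{−iξj} (a finite sum, since Q is supported in [0,N]) satisfies φ*(ξ) ≠ 0 for every ξ ∈ ℝ. -/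
/-!
Write `F w = ∫ e^{-iwt} Q t dt`. Each factor of `F` is
`(e^{-λ} - e^{-iw}) / (iw - λ) = e^{-(λ + iw)/2} · sinh z / z` with `z = (iw - λ)/2`, and
`∑ λ_j = 0`, so `F w = e^{-iwp} S w` with `S w = ∏_j sinhc ((iw - λ_j)/2)`. The symmetry
`λ ↦ -λ` matches every factor of `S` with its complex conjugate, hence `S ≥ 0`; moreover
`S w ≠ 0` for `|w| < 2π`. Poisson summation gives
`φ*(ξ) = ∑_n F (ξ + 2πn) = e^{-iξp} ∑_n S (ξ + 2πn)`, a convergent series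
(`|F w| = O(|w|^{-2p})`) of nonnegative reals with a positive term.
-/

open MeasureTheory
open Complex Filter Finset
open scoped Real FourierTransform ComplexOrder ComplexConjugate

noncomputable def sinhc : ℂ → ℂ := dslope sinh 0

lemma sinhc_zero : sinhc 0 = 1 := by
  rw [sinhc, dslope_same, (hasDerivAt_sinh 0).deriv, cosh_zero]

lemma sinhc_of_ne_zero {z : ℂ} (hz : z ≠ 0) : sinhc z = sinh z / z := by
  rw [sinhc, dslope_of_ne _ hz, slope_def_field, sinh_zero, sub_zero, sub_zero]

lemma continuous_sinhc : Continuous sinhc :=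
  continuousOn_univ.mp <| (continuousOn_dslope Filter.univ_mem).mpr
    ⟨continuous_sinh.continuousOn, differentiableAt_sinh⟩

lemma sinhc_neg (z : ℂ) : sinhc (-z) = sinhc z := by
  rcases eq_or_ne z 0 with rfl | hz
  · rw [neg_zero]
  · rw [sinhc_of_ne_zero hz, sinhc_of_ne_zero (neg_ne_zero.mpr hz), sinh_neg, neg_div_neg_eq]

lemma sinhc_conj (z : ℂ) : sinhc (conj z) = conj (sinhc z) := by
  rcases eq_or_ne z 0 with rfl | hz
  · rw [map_zero, sinhc_zero, map_one]
  · rw [sinhc_of_ne_zero hz, sinhc_of_ne_zero ((map_ne_zero _).mpr hz), map_div₀, sinh_conj]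

lemma sinhc_ne_zero {z : ℂ} (hz : |z.im| < π) : sinhc z ≠ 0 := by
  rcases eq_or_ne z 0 with rfl | hz0
  · rw [sinhc_zero]; exact one_ne_zero
  rw [sinhc_of_ne_zero hz0, div_ne_zero_iff]
  refine ⟨fun h => hz0 ?_, hz0⟩
  obtain ⟨k, hk⟩ := sin_eq_zero_iff.mp (show sin (z * I) = 0 by rw [sin_mul_I, h, zero_mul])
  have hre : z.re = 0 := by simpa using congrArg im hk
  have him : z.im = -(k * π) := by linarith [show -z.im = k * π by simpa using congrArg re hk]
  have hk0 : k = 0 := by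
    rw [him, abs_neg, abs_mul, abs_of_pos Real.pi_pos] at hz
    have : |(k : ℝ)| < 1 := by nlinarith [Real.pi_pos]
    exact Int.abs_lt_one_iff.mp (by exact_mod_cast this)
  exact Complex.ext (by simp [hre]) (by simp [him, hk0])

lemma exp_neg_sub_exp_neg_div_eq {a b : ℂ} (h : a ≠ b) :
    (exp (-a) - exp (-b)) / (b - a) = exp (-((a + b) / 2)) * sinhc ((b - a) / 2) := by
  have hba : b - a ≠ 0 := sub_ne_zero.mpr h.symm
  rw [sinhc_of_ne_zero (div_ne_zero hba two_ne_zero), sinh, mul_div_assoc', mul_div_assoc',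
    mul_sub, ← exp_add, ← exp_add]
  field_simp
  ring_nf

lemma sum_eq_zero_of_perm_neg {ι : Type*} [Fintype ι] {lam : ι → ℝ} (σ : Equiv.Perm ι)
    (hσ : ∀ j, lam (σ j) = -lam j) : ∑ j, lam j = 0 := by
  have := Equiv.sum_comp σ lam
  simp only [hσ, sum_neg_distrib] at this
  linarith

/-- `σ` carries the indices with `lam j > 0` onto those with `lam j < 0`, which turns their
factors into `conj (f (lam j)) * f (lam j)`; the indices with `lam j = 0` are then even in number
and contribute an even power of the real number `f 0`. -/
lemma prod_nonneg_of_perm_neg {ι : Type*} [Fintype ι] {lam : ι → ℝ} (σ : Equiv.Perm ι)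
    (hσ : ∀ j, lam (σ j) = -lam j) (hcard : Even (Fintype.card ι)) {f : ℝ → ℂ}
    (hf : ∀ x, f (-x) = conj (f x)) : 0 ≤ ∏ j, f (lam j) := by
  classical
  set pos := univ.filter fun j => 0 < lam j
  set neg := univ.filter fun j => lam j < 0
  set zero := univ.filter fun j => lam j = 0
  have hσ_mem : ∀ j, j ∈ pos ↔ σ j ∈ neg := fun j => by simp [pos, neg, hσ]
  have hunion : univ = pos ∪ neg ∪ zero := by
    ext j
    simp only [pos, neg, zero, mem_union, mem_filter, mem_univ, true_and]
    rcases lt_trichotomy (lam j) 0 with h | h | h <;> simp [h]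
  have hdisj₁ : Disjoint pos neg := disjoint_filter.mpr fun j _ h => h.le.not_gt
  have hdisj₂ : Disjoint (pos ∪ neg) zero := by
    simp only [disjoint_union_left, pos, neg, zero, disjoint_filter]
    exact ⟨fun j _ h => h.ne', fun j _ h => h.ne⟩
  have hprod : ∏ j, f (lam j) =
      (∏ j ∈ pos, f (lam j)) * (∏ j ∈ neg, f (lam j)) * ∏ j ∈ zero, f (lam j) := by
    rw [← prod_union hdisj₁, ← prod_union hdisj₂, ← hunion]
  have hcard' : Fintype.card ι = #pos + #neg + #zero := by
    rw [← card_union_of_disjoint hdisj₁, ← card_union_of_disjoint hdisj₂, ← hunion,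
      card_univ]
  have hneg : ∏ j ∈ neg, f (lam j) = ∏ j ∈ pos, conj (f (lam j)) :=
    (prod_equiv σ hσ_mem fun j _ => by rw [hσ, hf]).symm
  have hzero : ∏ j ∈ zero, f (lam j) = f 0 ^ #zero :=
    prod_eq_pow_card fun j hj => by rw [(mem_filter.mp hj).2]
  obtain ⟨m, hm⟩ : Even #zero := by
    rw [card_equiv σ hσ_mem] at hcard'
    rw [hcard'] at hcard
    exact (Nat.even_add.mp hcard).mp (by simp)
  have hf0 : star (f 0) = f 0 := by simpa using (hf 0).symm
  rw [hprod, hneg, hzero, ← prod_mul_distrib, hm, pow_add]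
  refine mul_nonneg (prod_nonneg fun j _ => ?_) ?_
  · rw [mul_comm]; exact star_mul_self_nonneg _
  · simpa [star_pow, hf0] using star_mul_self_nonneg (f 0 ^ m)

lemma I_mul_ofReal_ne_ofReal {w : ℝ} (hw : w ≠ 0) (l : ℝ) : I * w ≠ l :=
  fun h => hw (by simpa using congrArg im h)

lemma norm_prod_exp_neg_sub_exp_neg_div_le {ι : Type*} [Fintype ι] (lam : ι → ℝ) {w : ℝ}
    (hw : w ≠ 0) :
    ‖∏ j, (exp (-(lam j : ℂ)) - exp (-(I * w))) / (I * w - lam j)‖ ≤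
      (∏ j, (Real.exp (-lam j) + 1)) / |w| ^ Fintype.card ι := by
  rw [norm_prod, ← card_univ, ← prod_const, ← prod_div_distrib]
  refine prod_le_prod (fun _ _ => norm_nonneg _) fun j _ => ?_
  rw [norm_div]
  gcongr
  · refine (norm_sub_le _ _).trans_eq ?_
    rw [norm_exp, norm_exp]
    simp
  · simpa using abs_im_le_norm (I * w - lam j)

noncomputable def sinhcProd {ι : Type*} [Fintype ι] (lam : ι → ℝ) (w : ℝ) : ℂ :=
  ∏ j, sinhc ((I * w - lam j) / 2)

section sinhcProd

variable {ι : Type*} [Fintype ι] {lam : ι → ℝ}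

lemma continuous_sinhcProd : Continuous (sinhcProd lam) :=
  continuous_finsetProd _ fun _ _ => continuous_sinhc.comp (by fun_prop)

lemma sinhcProd_nonneg (σ : Equiv.Perm ι) (hσ : ∀ j, lam (σ j) = -lam j)
    (hcard : Even (Fintype.card ι)) (w : ℝ) : 0 ≤ sinhcProd lam w := by
  refine prod_nonneg_of_perm_neg (f := fun x : ℝ => sinhc ((I * w - x) / 2)) σ hσ hcard
    fun x => ?_
  rw [← sinhc_conj, ← sinhc_neg]
  congr 1
  rw [map_div₀, map_sub, map_mul, conj_I, conj_ofReal, conj_ofReal, map_ofNat, ofReal_neg]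
  ring

lemma sinhcProd_ne_zero {w : ℝ} (hw : |w| < 2 * π) : sinhcProd lam w ≠ 0 :=
  prod_ne_zero_iff.mpr fun j _ => sinhc_ne_zero <| by
    simp only [div_ofNat_im, sub_im, mul_im, I_re, ofReal_im, mul_zero, I_im, ofReal_re, one_mul,
      zero_add, sub_zero]
    rw [abs_div, abs_two]
    linarith

lemma prod_exp_neg_sub_exp_neg_div_eq (σ : Equiv.Perm ι) (hσ : ∀ j, lam (σ j) = -lam j)
    {w : ℝ} (hw : w ≠ 0) :
    ∏ j, (exp (-(lam j : ℂ)) - exp (-(I * w))) / (I * w - lam j) =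
      exp (-(I * w * Fintype.card ι / 2)) * sinhcProd lam w := by
  simp_rw [fun j => exp_neg_sub_exp_neg_div_eq (I_mul_ofReal_ne_ofReal hw (lam j)).symm,
    prod_mul_distrib, ← exp_sum, sinhcProd]
  have hsum : ∑ j, (lam j : ℂ) = 0 := by exact_mod_cast sum_eq_zero_of_perm_neg σ hσ
  rw [sum_neg_distrib, ← sum_div, sum_add_distrib, hsum, sum_const, card_univ, nsmul_eq_mul]
  ring_nf

end sinhcProd

lemma continuous_integral_exp_mul {f : ℝ → ℂ} (hf : Integrable f) :
    Continuous fun w : ℝ => ∫ t : ℝ, exp (-(I * w * t)) * f t := by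
  refine continuous_of_dominated (bound := fun t => ‖f t‖)
    (fun w => (Continuous.aestronglyMeasurable (by fun_prop)).mul hf.1) (fun w => ?_) hf.norm
    (ae_of_all _ fun t => by fun_prop)
  refine ae_of_all _ fun t => ?_
  rw [norm_mul, norm_exp]
  simp

lemma summable_comp_add_two_pi_mul_int {g : ℝ → ℂ} {C : ℝ} {k : ℕ} (hk : 2 ≤ k)
    (hg : ∀ w ≠ 0, ‖g w‖ ≤ C / |w| ^ k) (ξ : ℝ) :
    Summable fun n : ℤ => g (ξ + 2 * π * n) := by
  have hsum : Summable fun n : ℤ => C / (2 * π) ^ k * (1 / |n + ξ / (2 * π)| ^ (k : ℝ)) :=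
    ((Real.summable_one_div_int_add_rpow _ _).mpr (by exact_mod_cast hk)).mul_left _
  refine hsum.of_norm_bounded_eventually ?_
  have hfin : {n : ℤ | ξ + 2 * π * n = 0}.Finite := by
    refine Set.Subsingleton.finite fun m hm n hn => ?_
    have hm : ξ + 2 * π * m = 0 := hm
    have hn : ξ + 2 * π * n = 0 := hn
    have : (m : ℝ) = n := by nlinarith [Real.pi_pos]
    exact_mod_cast this
  filter_upwards [hfin.compl_mem_cofinite] with n hn
  refine (hg _ hn).trans_eq ?_
  rw [Real.rpow_natCast, show ξ + 2 * π * n = 2 * π * (n + ξ / (2 * π)) by field_simp; ring,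
    abs_mul, mul_pow, abs_of_pos Real.two_pi_pos]
  ring

lemma tsum_mul_exp_eq_tsum_integral {q : ℝ → ℂ} (hq : Continuous q) (hs : HasCompactSupport q)
    {ξ : ℝ}
    (hsum : Summable fun n : ℤ => ∫ t : ℝ, exp (-(I * ↑(ξ + 2 * π * n) * t)) * q t) :
    ∑' n : ℤ, q n * exp (-(I * ξ * n)) =
      ∑' n : ℤ, ∫ t : ℝ, exp (-(I * ↑(ξ + 2 * π * n) * t)) * q t := by
  set f : ℝ → ℂ := fun t => exp (-(I * ξ * t)) * q t
  have hf : HasCompactSupport f := hs.mul_left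
  have hfc : Continuous f := (continuous_exp.comp (by fun_prop)).mul hq
  have hFf (n : ℤ) : 𝓕 f n = ∫ t : ℝ, exp (-(I * ↑(ξ + 2 * π * n) * t)) * q t := by
    rw [Real.fourier_real_eq_integral_exp_smul]
    congr 1 with t
    rw [smul_eq_mul, ← mul_assoc, ← exp_add]
    push_cast
    ring_nf
  have hdecay : f =O[cocompact ℝ] fun x => |x| ^ (-2 : ℝ) := by
    refine EventuallyEq.trans_isBigO ?_ (Asymptotics.isBigO_zero _ _)
    exact eventually_of_mem hf.isCompact.compl_mem_cocompact fun x hx =>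
      image_eq_zero_of_notMem_tsupport hx
  have := Real.tsum_eq_tsum_fourier_of_rpow_decay_of_summable hfc one_lt_two hdecay
    (by simpa only [hFf] using hsum) 0
  simp only [zero_add, QuotientAddGroup.mk_zero, fourier_eval_zero, mul_one, hFf] at this
  rw [← this]
  exact tsum_congr fun n => mul_comm _ _

lemma exp_neg_I_mul_add_two_pi_mul_int_mul_natCast (ξ : ℝ) (n : ℤ) (p : ℕ) :
    exp (-(I * ↑(ξ + 2 * π * n) * p)) = exp (-(I * ξ * p)) := by
  rw [show -(I * ↑(ξ + 2 * π * n) * p) = -(I * ξ * p) + ↑(-(n * p) : ℤ) * (2 * π * I) by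
    push_cast; ring, exp_add, exp_int_mul_two_pi_mul_I, mul_one]

lemma exists_abs_add_two_pi_mul_int_lt (ξ : ℝ) : ∃ n : ℤ, |ξ + 2 * π * n| < 2 * π := by
  refine ⟨-⌊ξ / (2 * π)⌋, ?_⟩
  have hfract : ξ + 2 * π * ↑(-⌊ξ / (2 * π)⌋) = 2 * π * Int.fract (ξ / (2 * π)) := by
    rw [Int.fract, mul_sub, mul_div_cancel₀ _ Real.two_pi_pos.ne']
    push_cast
    ring
  rw [hfract, abs_of_nonneg (mul_nonneg Real.two_pi_pos.le (Int.fract_nonneg _))]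
  exact mul_lt_of_lt_one_right Real.two_pi_pos (Int.fract_lt_one _)

lemma tsum_comp_add_two_pi_mul_int_pos {S : ℝ → ℂ} (hS : ∀ w, 0 ≤ S w)
    (hS_pos : ∀ w, |w| < 2 * π → S w ≠ 0) (ξ : ℝ)
    (hsum : Summable fun n : ℤ => S (ξ + 2 * π * n)) :
    0 < ∑' n : ℤ, S (ξ + 2 * π * n) := by
  obtain ⟨n, hn⟩ := exists_abs_add_two_pi_mul_int_lt ξ
  exact hsum.tsum_pos (fun _ => hS _) n ((hS _).lt_of_ne (hS_pos _ hn).symm)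

/-- Let `p ≥ 1`, `N = 2p`, and let `λ₁, …, λ_N` be real numbers forming a
symmetric multiset (`{λ_j} = {−λ_j}`).  Let `Q : ℝ → ℝ` be continuous, supported in `[0, N]`,
with Fourier transform `𝓕Q(ξ) = ∏_{j=1}^N (e^{−λ_j} − e^{−iξ})/(iξ − λ_j)` (for `iξ ≠ λ_j`).
Then `φ*(ξ) := Σ_{j∈ℤ} Q(j)·e^{−iξj} ≠ 0` for every `ξ ∈ ℝ`. -/
theorem statement9
    (p : ℕ) (hp : 1 ≤ p)
    (lam : Fin (2 * p) → ℝ)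
    (hsym : ∃ σ : Equiv.Perm (Fin (2 * p)), ∀ j, lam (σ j) = -lam j)
    (Q : ℝ → ℝ) (hQc : Continuous Q)
    (hQsupp : Function.support Q ⊆ Set.Icc (0 : ℝ) (2 * p : ℝ))
    (hQF : ∀ ξ : ℝ, (∀ j, Complex.I * (ξ : ℂ) ≠ (lam j : ℂ)) →
      (∫ t : ℝ, Complex.exp (-(Complex.I * ξ * t)) * Q t) =
        ∏ j, (Complex.exp (-(lam j : ℂ)) - Complex.exp (-(Complex.I * ξ))) /
          (Complex.I * ξ - (lam j : ℂ))) :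
    ∀ ξ : ℝ, (∑' j : ℤ, (Q j : ℂ) * Complex.exp (-(Complex.I * ξ * j))) ≠ 0 := by
  obtain ⟨σ, hσ⟩ := hsym
  have hQc' : Continuous fun t => (Q t : ℂ) := continuous_ofReal.comp hQc
  have hQs : HasCompactSupport fun t => (Q t : ℂ) :=
    .intro isCompact_Icc fun t ht => by
      rw [Function.notMem_support.mp (mt (hQsupp ·) ht), ofReal_zero]
  set F : ℝ → ℂ := fun w => ∫ t : ℝ, exp (-(I * w * t)) * Q t
  -- `hQF` gives no information at `w = 0` when some `lam j = 0`; continuity fills that point in.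
  have hF : ∀ w, F w = exp (-(I * w * p)) * sinhcProd lam w := by
    refine congrFun (Continuous.ext_on (dense_compl_singleton 0)
      (continuous_integral_exp_mul (hQc'.integrable_of_hasCompactSupport hQs))
      ((by fun_prop : Continuous fun w : ℝ => exp (-(I * w * p))).mul continuous_sinhcProd)
      fun w (hw : w ≠ 0) => ?_)
    dsimp only [F]
    rw [hQF w fun j => I_mul_ofReal_ne_ofReal hw _, prod_exp_neg_sub_exp_neg_div_eq σ hσ hw,
      Fintype.card_fin]
    push_cast
    ring_nf
  have hF_le (w : ℝ) (hw : w ≠ 0) :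
      ‖F w‖ ≤ (∏ j, (Real.exp (-lam j) + 1)) / |w| ^ (2 * p) := by
    dsimp only [F]
    rw [hQF w fun j => I_mul_ofReal_ne_ofReal hw _]
    simpa only [Fintype.card_fin] using norm_prod_exp_neg_sub_exp_neg_div_le lam hw
  intro ξ
  have hF_sum := summable_comp_add_two_pi_mul_int (by omega) hF_le ξ
  have hterm (n : ℤ) :
      F (ξ + 2 * π * n) = exp (-(I * ξ * p)) * sinhcProd lam (ξ + 2 * π * n) := by
    rw [hF, exp_neg_I_mul_add_two_pi_mul_int_mul_natCast]
  rw [tsum_mul_exp_eq_tsum_integral hQc' hQs hF_sum]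
  change ∑' n : ℤ, F (ξ + 2 * π * n) ≠ 0
  rw [tsum_congr hterm, tsum_mul_left]
  refine mul_ne_zero (exp_ne_zero _) (tsum_comp_add_two_pi_mul_int_pos
    (sinhcProd_nonneg σ hσ (by rw [Fintype.card_fin]; exact even_two_mul p))
    (fun _ => sinhcProd_ne_zero) ξ ?_).ne'
  exact (summable_mul_left_iff (exp_ne_zero _)).mp (hF_sum.congr hterm)
end

section
/- Fix integers n ≥ 2 and p ≥ 1, set N = 2p, and for each integer k ≥ 0 define the vector Λ_k = [λ₁, …, λ_N] by λ_{1+j} = k + 2j for j = 0, …, p−1 and λ_{1+p+j} = −n − k + 2 + 2j for j = 0, …, p−1. Then there exist an integer k₀ ≥ 1 and a constant C > 0 such that for every integer k ≥ k₀ and every ξ ∈ ℝ one has ∏_{j=1}^{N} |e^{−λ_j} − e^{−iξ}| / |iξ − λ_j| ≤ C·e^{pk}/(ξ² + k²)^p. -/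
/-!
Each factor has numerator at most `e^{-λ} + 1` and denominator `√(ξ² + λ²)`.  For the `p`
indices with `λ = k + 2j ≥ k` this gives `2 / √(ξ² + k²)`.  For the other `p` indices
`-λ = n + k - 2 - 2j` lies between `k/2` (once `k ≥ 4p`) and `n + k`, which gives
`4 e^{n+k} / √(ξ² + k²)`.  Multiplying, the product is at most
`8^p e^{np} e^{pk} / (ξ² + k²)^p`.
-/

open Complex

noncomputable def fourierFactorNorm (lam ξ : ℝ) : ℝ :=
  ‖(Real.exp (-lam) : ℂ) - exp (-(I * ξ))‖ / ‖I * ξ - (lam : ℂ)‖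

lemma norm_I_mul_sub_ofReal (ξ lam : ℝ) :
    ‖I * ξ - (lam : ℂ)‖ = √(ξ ^ 2 + lam ^ 2) := by
  rw [← norm_neg, show -(I * ξ - (lam : ℂ)) = lam + (-ξ : ℝ) * I by push_cast; ring,
    norm_add_mul_I]
  ring_nf

lemma norm_ofReal_exp_sub_exp_neg_I_mul_le (lam ξ : ℝ) :
    ‖(Real.exp (-lam) : ℂ) - exp (-(I * ξ))‖ ≤ Real.exp (-lam) + 1 := by
  have hunit : ‖exp (-(I * ξ))‖ = 1 := by
    rw [show -(I * ξ) = (-ξ : ℝ) * I by push_cast; ring, norm_exp_ofReal_mul_I]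
  calc _ ≤ ‖(Real.exp (-lam) : ℂ)‖ + ‖exp (-(I * ξ))‖ := norm_sub_le _ _
    _ = Real.exp (-lam) + 1 := by rw [hunit, norm_real, Real.norm_of_nonneg (Real.exp_pos _).le]

lemma fourierFactorNorm_le {lam ξ κ c : ℝ} (hκ : 0 < κ) (hc : 1 ≤ c)
    (hlam : κ ≤ c * |lam|) :
    fourierFactorNorm lam ξ ≤ c * (Real.exp (-lam) + 1) / √(ξ ^ 2 + κ ^ 2) := by
  have hden : √(ξ ^ 2 + κ ^ 2) ≤ c * √(ξ ^ 2 + lam ^ 2) := by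
    rw [← Real.sqrt_sq (by linarith : 0 ≤ c), ← Real.sqrt_mul (by positivity)]
    apply Real.sqrt_le_sqrt
    have hκ2 : κ ^ 2 ≤ c ^ 2 * lam ^ 2 := by
      simpa only [mul_pow, sq_abs] using pow_le_pow_left₀ hκ.le hlam 2
    have hξ2 : ξ ^ 2 ≤ c ^ 2 * ξ ^ 2 := le_mul_of_one_le_left (sq_nonneg ξ) (one_le_pow₀ hc)
    linarith
  rw [fourierFactorNorm, norm_I_mul_sub_ofReal, ← mul_div_mul_left _ _ (by linarith : c ≠ 0)]
  exact div_le_div₀ (by positivity)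
    (mul_le_mul_of_nonneg_left (norm_ofReal_exp_sub_exp_neg_I_mul_le lam ξ) (by linarith))
    (by positivity) hden

lemma fourierFactorNorm_le_of_ge {lam ξ κ : ℝ} (hκ : 0 < κ) (hlam : κ ≤ lam) :
    fourierFactorNorm lam ξ ≤ 2 / √(ξ ^ 2 + κ ^ 2) := by
  have habs : κ ≤ 1 * |lam| := by rwa [one_mul, abs_of_pos (hκ.trans_le hlam)]
  refine (fourierFactorNorm_le hκ le_rfl habs).trans
    (div_le_div_of_nonneg_right ?_ (Real.sqrt_nonneg _))
  linarith [Real.exp_le_one_iff.mpr (by linarith : -lam ≤ 0)]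

lemma fourierFactorNorm_le_of_neg {lam ξ κ M : ℝ} (hκ : 0 < κ) (hlam : κ ≤ -2 * lam)
    (hM : -lam ≤ M) :
    fourierFactorNorm lam ξ ≤ 4 * Real.exp M / √(ξ ^ 2 + κ ^ 2) := by
  refine (fourierFactorNorm_le hκ one_le_two (by rw [abs_of_neg (by linarith)]; linarith)).trans
    (div_le_div_of_nonneg_right ?_ (Real.sqrt_nonneg _))
  linarith [Real.exp_le_exp.mpr hM, Real.one_le_exp (by linarith : 0 ≤ M)]

lemma prod_fin_two_mul_ite {M : Type*} [CommMonoid M] (p : ℕ) (a b : M) :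
    ∏ j : Fin (2 * p), (if (j : ℕ) < p then a else b) = a ^ p * b ^ p := by
  rw [Fin.prod_univ_eq_prod_range (fun i => if i < p then a else b), two_mul,
    Finset.prod_range_add, Finset.prod_congr rfl fun i hi => if_pos (Finset.mem_range.mp hi),
    Finset.prod_congr rfl fun i _ => if_neg (Nat.not_lt.mpr (Nat.le_add_right p i))]
  simp only [Finset.prod_const, Finset.card_range]

theorem statement12_general
    (n p : ℕ)
    (lam : ℕ → Fin (2 * p) → ℝ)
    (hlam : ∀ (k : ℕ) (j : Fin (2 * p)),
      lam k j = if (j : ℕ) < p then (k : ℝ) + 2 * (j : ℕ)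
                else -(n : ℝ) - (k : ℝ) + 2 + 2 * (((j : ℕ) - p : ℕ) : ℝ)) :
    ∃ k₀ : ℕ, 1 ≤ k₀ ∧ ∃ C : ℝ, 0 < C ∧
      ∀ k : ℕ, k₀ ≤ k → ∀ ξ : ℝ,
        (∏ j : Fin (2 * p),
          ‖(Real.exp (-(lam k j)) : ℂ) - Complex.exp (-(Complex.I * ξ))‖ /
            ‖Complex.I * ξ - (lam k j : ℂ)‖) ≤
        C * Real.exp ((p : ℝ) * k) / (ξ ^ 2 + (k : ℝ) ^ 2) ^ p := by
  refine ⟨4 * p + 1, Nat.le_add_left 1 _, 8 ^ p * Real.exp n ^ p, by positivity,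
    fun k hk ξ => ?_⟩
  have hk : (4 * p + 1 : ℝ) ≤ k := by exact_mod_cast hk
  have hD : 0 < ξ ^ 2 + (k : ℝ) ^ 2 := by nlinarith [sq_nonneg ξ]
  have hfactor : ∀ j : Fin (2 * p), fourierFactorNorm (lam k j) ξ ≤
      (if (j : ℕ) < p then 2 else 4 * Real.exp (n + k)) / √(ξ ^ 2 + (k : ℝ) ^ 2) := by
    intro j
    rw [hlam]
    split_ifs with hj
    · exact fourierFactorNorm_le_of_ge (by linarith) (by linarith [j.val.cast_nonneg (α := ℝ)])
    · have hm : (((j : ℕ) - p : ℕ) : ℝ) + 1 ≤ p := by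
        exact_mod_cast (by omega : (j : ℕ) - p + 1 ≤ p)
      exact fourierFactorNorm_le_of_neg (by linarith) (by linarith [n.cast_nonneg (α := ℝ)])
        (by linarith [Nat.cast_nonneg (α := ℝ) ((j : ℕ) - p)])
  calc _ ≤ ∏ j : Fin (2 * p),
        (if (j : ℕ) < p then 2 else 4 * Real.exp (n + k)) / √(ξ ^ 2 + (k : ℝ) ^ 2) :=
      Finset.prod_le_prod (fun _ _ => div_nonneg (norm_nonneg _) (norm_nonneg _))
        fun j _ => hfactor j
    _ = 2 ^ p * (4 * Real.exp (n + k)) ^ p / √(ξ ^ 2 + (k : ℝ) ^ 2) ^ (2 * p) := by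
      rw [Finset.prod_div_distrib, prod_fin_two_mul_ite, Finset.prod_const, Finset.card_univ,
        Fintype.card_fin]
    _ = _ := by
      rw [pow_mul, Real.sq_sqrt hD.le, Real.exp_add, Real.exp_nat_mul,
        show (8 : ℝ) ^ p = 2 ^ p * 4 ^ p by rw [← mul_pow]; norm_num]
      ring

/-- Fix `n ≥ 2`, `p ≥ 1`, `N = 2p`, and for each integer `k ≥ 0` let
`Λ_k = [λ₁, …, λ_N]` with `λ_{1+j} = k + 2j` and `λ_{1+p+j} = −n − k + 2 + 2j`
(`j = 0, …, p−1`).  Then there exist an integer `k₀ ≥ 1` and `C > 0` such that for every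
`k ≥ k₀` and every `ξ ∈ ℝ`,
`∏_{j=1}^N |e^{−λ_j} − e^{−iξ}|/|iξ − λ_j| ≤ C·e^{pk}/(ξ² + k²)^p`. -/
theorem statement12
    (n p : ℕ) (hn : 2 ≤ n) (hp : 1 ≤ p)
    (lam : ℕ → Fin (2 * p) → ℝ)
    (hlam : ∀ (k : ℕ) (j : Fin (2 * p)),
      lam k j = if (j : ℕ) < p then (k : ℝ) + 2 * (j : ℕ)
                else -(n : ℝ) - (k : ℝ) + 2 + 2 * (((j : ℕ) - p : ℕ) : ℝ)) :
    ∃ k₀ : ℕ, 1 ≤ k₀ ∧ ∃ C : ℝ, 0 < C ∧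
      ∀ k : ℕ, k₀ ≤ k → ∀ ξ : ℝ,
        (∏ j : Fin (2 * p),
          ‖(Real.exp (-(lam k j)) : ℂ) - Complex.exp (-(Complex.I * ξ))‖ /
            ‖Complex.I * ξ - (lam k j : ℂ)‖) ≤
        C * Real.exp ((p : ℝ) * k) / (ξ ^ 2 + (k : ℝ) ^ 2) ^ p :=
  statement12_general n p lam hlam
end
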